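/- For every positive integer k, gcd(k, binomial(k+2,2) − 1, binomial(k+3,3) − 1) = k / (gcd(2,k) · gcd(3,k)). -/

import Mathlib

/-!
Clearing denominators, `2·(C(k+2,2) − 1) = k(k+3)` and `6·(C(k+3,3) − 1) = k(k² + 6k + 11)`, so
six times the left-hand side equals `k · gcd(6, 3(k+3), k² + 6k + 11)`. That last gcd depends only
on `k mod 6`, and checking the six residues shows it is `6 / gcd(6,k)`; finally
`gcd(6,k) = gcd(2,k)·gcd(3,k)` because 2 and 3 are coprime.
-/

theorem Nat.gcd_gcd_mod_mod (n a b : ℕ) : gcd n (gcd (a % n) (b % n)) = gcd n (gcd a b) := by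
  have key : ∀ d, d ∣ n → (d ∣ gcd (a % n) (b % n) ↔ d ∣ gcd a b) := fun d hd => by
    simp only [Nat.dvd_gcd_iff, Nat.dvd_mod_iff hd]
  exact Nat.dvd_antisymm
    (Nat.dvd_gcd (Nat.gcd_dvd_left _ _) ((key _ (Nat.gcd_dvd_left _ _)).1 (Nat.gcd_dvd_right _ _)))
    (Nat.dvd_gcd (Nat.gcd_dvd_left _ _) ((key _ (Nat.gcd_dvd_left _ _)).2 (Nat.gcd_dvd_right _ _)))

theorem two_mul_choose_two_sub_one (k : ℕ) : 2 * ((k + 2).choose 2 - 1) = k * (k + 3) := by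
  have h := Nat.descFactorial_eq_factorial_mul_choose (k + 2) 2
  have hpos : 1 ≤ (k + 2).choose 2 := Nat.choose_pos (by omega)
  simp only [Nat.descFactorial_succ, Nat.descFactorial_zero, Nat.factorial] at h
  zify [hpos] at h ⊢
  push_cast at h
  linear_combination -h

theorem six_mul_choose_three_sub_one (k : ℕ) :
    6 * ((k + 3).choose 3 - 1) = k * (k ^ 2 + 6 * k + 11) := by
  have h := Nat.descFactorial_eq_factorial_mul_choose (k + 3) 3
  have hpos : 1 ≤ (k + 3).choose 3 := Nat.choose_pos (by omega)
  simp only [Nat.descFactorial_succ, Nat.descFactorial_zero, Nat.factorial] at h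
  zify [hpos] at h ⊢
  push_cast at h
  linear_combination -h

theorem six_mul_gcd_choose_sub_one (k : ℕ) :
    6 * Nat.gcd k (Nat.gcd ((k + 2).choose 2 - 1) ((k + 3).choose 3 - 1)) =
      k * Nat.gcd 6 (Nat.gcd (3 * (k + 3)) (k ^ 2 + 6 * k + 11)) := by
  have hA : 6 * ((k + 2).choose 2 - 1) = k * (3 * (k + 3)) := by
    rw [show 6 = 3 * 2 from rfl, mul_assoc, two_mul_choose_two_sub_one]
    ring
  rw [← Nat.gcd_mul_left, ← Nat.gcd_mul_left, hA, six_mul_choose_three_sub_one, mul_comm 6 k,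
    Nat.gcd_mul_left, Nat.gcd_mul_left]

theorem gcd_six_gcd_mul_gcd_six (k : ℕ) :
    Nat.gcd 6 (Nat.gcd (3 * (k + 3)) (k ^ 2 + 6 * k + 11)) * Nat.gcd 6 k = 6 := by
  have h6 : k % 6 < 6 := Nat.mod_lt _ (by norm_num)
  rw [← Nat.gcd_gcd_mod_mod, Nat.gcd_rec 6 k]
  interval_cases h : k % 6 <;> simp [Nat.add_mod, Nat.mul_mod, Nat.pow_mod, h]

theorem cyclic_order_SU4_general (k : ℕ) :
    Nat.gcd k (Nat.gcd ((k + 2).choose 2 - 1) ((k + 3).choose 3 - 1)) =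
      k / (Nat.gcd 2 k * Nat.gcd 3 k) := by
  set g := Nat.gcd k (Nat.gcd ((k + 2).choose 2 - 1) ((k + 3).choose 3 - 1))
  have hgcd_six : Nat.gcd 2 k * Nat.gcd 3 k = Nat.gcd 6 k := by
    rw [Nat.gcd_comm 2, Nat.gcd_comm 3, ← Nat.Coprime.gcd_mul k (by norm_num), Nat.gcd_comm]
  rw [hgcd_six]
  refine (Nat.div_eq_of_eq_mul_left (Nat.gcd_pos_of_pos_left _ (by norm_num)) ?_).symm
  apply Nat.eq_of_mul_eq_mul_left (by norm_num : 0 < 6)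
  calc 6 * k = k * (Nat.gcd 6 (Nat.gcd (3 * (k + 3)) (k ^ 2 + 6 * k + 11)) * Nat.gcd 6 k) := by
        rw [gcd_six_gcd_mul_gcd_six, mul_comm]
    _ = 6 * (g * Nat.gcd 6 k) := by
        rw [← mul_assoc, ← six_mul_gcd_choose_sub_one, mul_assoc]

/-- For every positive integer `k`,
`gcd(k, C(k+2,2) − 1, C(k+3,3) − 1) = k / (gcd(2,k)·gcd(3,k))`.  The left-hand side is
the cyclic order `c(SU(4),k)` of the twisted K-homology of `SU(4)`. -/
theorem cyclic_order_SU4 (k : ℕ) (hk : 0 < k) :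
    Nat.gcd k (Nat.gcd ((k + 2).choose 2 - 1) ((k + 3).choose 3 - 1)) =
      k / (Nat.gcd 2 k * Nat.gcd 3 k) :=
  cyclic_order_SU4_general k
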